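/- On any finite connected weighted graph, the effective resistance R is a metric on V: R(x,y) = 0 if and only if x = y, R(x,y) = R(y,x), and R satisfies the triangle inequality R(x,z) ≤ R(x,y) + R(y,z) for all x, y, z ∈ V. -/
import Mathlib

open Finset

/-- The energy `E(f) = (1/2) Σ_{v,w} c(v,w) (f(v) - f(w))²` of a function on a finite weighted
graph. -/
noncomputable def graphEnergy {V : Type*} [Fintype V] (c : V → V → ℝ) (f : V → ℝ) : ℝ :=
  (1 / 2) * ∑ v : V, ∑ w : V, c v w * (f v - f w) ^ 2

/-- The effective resistance
`R(x,y) := (inf {E(f) : f : V → ℝ, f(x) = 1, f(y) = 0})⁻¹` for `x ≠ y`, with `R(x,x) := 0`. -/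
noncomputable def effRes {V : Type*} [Fintype V] [DecidableEq V]
    (c : V → V → ℝ) (x y : V) : ℝ :=
  if x = y then 0
  else (sInf {t | ∃ g : V → ℝ, g x = 1 ∧ g y = 0 ∧ t = graphEnergy c g})⁻¹

section Aux

variable {V : Type*} [Fintype V]

/-- Auxiliary: the set of energies of feasible potentials. -/
def potSet (c : V → V → ℝ) (x y : V) : Set ℝ :=
  {t | ∃ g : V → ℝ, g x = 1 ∧ g y = 0 ∧ t = graphEnergy c g}

lemma effRes_of_ne [DecidableEq V] (c : V → V → ℝ) {x y : V} (hxy : x ≠ y) :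
    effRes c x y = (sInf (potSet c x y))⁻¹ := by
  rw [effRes, if_neg hxy]; rfl

/-- The (weighted) Laplacian / net current at a vertex. -/
noncomputable def gL (c : V → V → ℝ) (f : V → ℝ) (v : V) : ℝ :=
  ∑ w : V, c v w * (f v - f w)

/-- The Dirichlet bilinear form. -/
noncomputable def gB (c : V → V → ℝ) (f g : V → ℝ) : ℝ :=
  (1 / 2) * ∑ v : V, ∑ w : V, c v w * (f v - f w) * (g v - g w)

lemma gB_self (c : V → V → ℝ) (f : V → ℝ) : gB c f f = graphEnergy c f := by
  unfold gB graphEnergy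
  congr 1
  exact Finset.sum_congr rfl fun v _ => Finset.sum_congr rfl fun w _ => by ring

lemma gB_eq_sum (c : V → V → ℝ) (hsymm : ∀ v w, c v w = c w v) (f g : V → ℝ) :
    gB c f g = ∑ v : V, g v * gL c f v := by
  have hA : ∑ v : V, g v * gL c f v = ∑ v : V, ∑ w : V, c v w * g v * (f v - f w) := by
    simp only [gL, Finset.mul_sum]
    exact Finset.sum_congr rfl fun v _ => Finset.sum_congr rfl fun w _ => by ring
  have hA2 : ∑ v : V, ∑ w : V, c v w * g w * (f v - f w)
      = -∑ v : V, ∑ w : V, c v w * g v * (f v - f w) := by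
    rw [Finset.sum_comm, ← Finset.sum_neg_distrib]
    refine Finset.sum_congr rfl fun v _ => ?_
    rw [← Finset.sum_neg_distrib]
    exact Finset.sum_congr rfl fun w _ => by rw [hsymm w v]; ring
  have hsplit : ∑ v : V, ∑ w : V, c v w * (f v - f w) * (g v - g w)
      = (∑ v : V, ∑ w : V, c v w * g v * (f v - f w))
        - ∑ v : V, ∑ w : V, c v w * g w * (f v - f w) := by
    rw [← Finset.sum_sub_distrib]
    refine Finset.sum_congr rfl fun v _ => ?_
    rw [← Finset.sum_sub_distrib]
    exact Finset.sum_congr rfl fun w _ => by ring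
  rw [hA, gB, hsplit, hA2]
  ring

lemma gB_expand (c : V → V → ℝ) (f g : V → ℝ) (t : ℝ) :
    gB c (fun v => f v + t * g v) (fun v => f v + t * g v)
      = gB c f f + 2 * t * gB c f g + t ^ 2 * gB c g g := by
  have hterm : ∀ v w : V,
      c v w * ((f v + t * g v) - (f w + t * g w)) * ((f v + t * g v) - (f w + t * g w))
      = c v w * (f v - f w) * (f v - f w)
        + (2 * t) * (c v w * (f v - f w) * (g v - g w))
        + t ^ 2 * (c v w * (g v - g w) * (g v - g w)) := fun v w => by ring
  simp only [gB, hterm, Finset.sum_add_distrib, ← Finset.mul_sum]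
  ring

lemma graphEnergy_nonneg (c : V → V → ℝ) (hnonneg : ∀ v w, 0 ≤ c v w) (f : V → ℝ) :
    0 ≤ graphEnergy c f := by
  unfold graphEnergy
  refine mul_nonneg (by norm_num) (Finset.sum_nonneg fun v _ => Finset.sum_nonneg fun w _ => ?_)
  exact mul_nonneg (hnonneg v w) (sq_nonneg _)

lemma gB_sq_le (c : V → V → ℝ) (hnonneg : ∀ v w, 0 ≤ c v w) (f g : V → ℝ) :
    gB c f g ^ 2 ≤ gB c f f * gB c g g := by
  have key : ∀ t : ℝ, 0 ≤ gB c g g * (t * t) + (2 * gB c f g) * t + gB c f f := by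
    intro t
    have h0 : 0 ≤ graphEnergy c (fun v => f v + t * g v) := graphEnergy_nonneg c hnonneg _
    rw [← gB_self, gB_expand] at h0
    nlinarith [h0]
  have hd := discrim_le_zero key
  rw [discrim] at hd
  nlinarith [hd]

lemma gL_comb (c : V → V → ℝ) (a b : ℝ) (f g : V → ℝ) (s : V) :
    gL c (fun v => a * f v + b * g v) s = a * gL c f s + b * gL c g s := by
  simp only [gL, Finset.mul_sum, ← Finset.sum_add_distrib]
  exact Finset.sum_congr rfl fun w _ => by ring

lemma gL_sum (c : V → V → ℝ) (hsymm : ∀ v w, c v w = c w v) (f : V → ℝ) :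
    ∑ v : V, gL c f v = 0 := by
  have h := gB_eq_sum c hsymm f (fun _ => 1)
  have h2 : gB c f (fun _ => 1) = 0 := by
    unfold gB
    simp
  rw [h2] at h
  simpa using h.symm

lemma graphEnergy_ge_term (c : V → V → ℝ) (hnonneg : ∀ v w, 0 ≤ c v w) (f : V → ℝ) (a b : V) :
    (1 / 2) * (c a b * (f a - f b) ^ 2) ≤ graphEnergy c f := by
  unfold graphEnergy
  have h1 : c a b * (f a - f b) ^ 2 ≤ ∑ w : V, c a w * (f a - f w) ^ 2 :=
    Finset.single_le_sum (f := fun w => c a w * (f a - f w) ^ 2)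
      (fun w _ => mul_nonneg (hnonneg a w) (sq_nonneg _)) (mem_univ b)
  have h2 : ∑ w : V, c a w * (f a - f w) ^ 2
      ≤ ∑ v : V, ∑ w : V, c v w * (f v - f w) ^ 2 :=
    Finset.single_le_sum (f := fun v => ∑ w : V, c v w * (f v - f w) ^ 2)
      (fun v _ => Finset.sum_nonneg fun w _ => mul_nonneg (hnonneg v w) (sq_nonneg _))
      (mem_univ a)
  nlinarith [h1.trans h2]

/-- Positive lower bound on a feasible energy, from a path. -/
lemma energy_lower_bound (c : V → V → ℝ) (hnonneg : ∀ v w, 0 ≤ c v w)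
    {x y : V} (hxy : x ≠ y) (n : ℕ) (p : ℕ → V) (hp0 : p 0 = x) (hpn : p n = y)
    (hppos : ∀ k < n, 0 < c (p k) (p (k + 1))) :
    ∃ δ : ℝ, 0 < δ ∧ ∀ f : V → ℝ, f x = 1 → f y = 0 → δ ≤ graphEnergy c f := by
  have hn : n ≠ 0 := by rintro rfl; exact hxy (hp0 ▸ hpn ▸ rfl)
  have hne : (Finset.range n).Nonempty := Finset.nonempty_range_iff.mpr hn
  set cmin : ℝ := (Finset.range n).inf' hne (fun k => c (p k) (p (k + 1))) with hcmin
  have hcminpos : 0 < cmin := by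
    rw [hcmin, Finset.lt_inf'_iff]
    exact fun k hk => hppos k (Finset.mem_range.mp hk)
  refine ⟨(1 / 2) * (cmin * (1 / n) ^ 2), by positivity, fun f hfx hfy => ?_⟩
  have htel : ∑ k ∈ Finset.range n, (f (p k) - f (p (k + 1))) = 1 := by
    rw [Finset.sum_range_sub' (fun k => f (p k)) n]
    simp only [hp0, hpn, hfx, hfy]
    ring
  have hsum : ∑ _k ∈ Finset.range n, (1 / n : ℝ)
      ≤ ∑ k ∈ Finset.range n, |f (p k) - f (p (k + 1))| := by
    rw [Finset.sum_const, Finset.card_range, nsmul_eq_mul]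
    have hn' : (n : ℝ) ≠ 0 := Nat.cast_ne_zero.mpr hn
    rw [mul_one_div, div_self hn']
    calc (1 : ℝ) = |∑ k ∈ Finset.range n, (f (p k) - f (p (k + 1)))| := by rw [htel]; simp
      _ ≤ _ := Finset.abs_sum_le_sum_abs _ _
  obtain ⟨k, hk, hkge⟩ := Finset.exists_le_of_sum_le hne hsum
  have hterm := graphEnergy_ge_term c hnonneg f (p k) (p (k + 1))
  have hc : cmin ≤ c (p k) (p (k + 1)) := Finset.inf'_le _ hk
  have hsq : (1 / n : ℝ) ^ 2 ≤ (f (p k) - f (p (k + 1))) ^ 2 := by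
    have h1 : (0:ℝ) ≤ 1 / n := by positivity
    calc (1 / n : ℝ) ^ 2 ≤ |f (p k) - f (p (k + 1))| ^ 2 := pow_le_pow_left₀ h1 hkge 2
      _ = _ := sq_abs _
  have hmul : cmin * (1 / n : ℝ) ^ 2 ≤ c (p k) (p (k + 1)) * (f (p k) - f (p (k + 1))) ^ 2 :=
    mul_le_mul hc hsq (by positivity) (hnonneg _ _)
  nlinarith [hterm]

lemma potSet_nonempty [DecidableEq V] (c : V → V → ℝ) {x y : V} (hxy : x ≠ y) :
    (potSet c x y).Nonempty := by
  refine ⟨graphEnergy c (fun v => if v = x then 1 else 0),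
    (fun v => if v = x then 1 else 0), by simp, ?_, rfl⟩
  simp [Ne.symm hxy]

lemma potSet_bddBelow (c : V → V → ℝ) (hnonneg : ∀ v w, 0 ≤ c v w) (x y : V) :
    BddBelow (potSet c x y) := by
  refine ⟨0, fun t ht => ?_⟩
  obtain ⟨g, _, _, rfl⟩ := ht
  exact graphEnergy_nonneg c hnonneg g

lemma sInf_potSet_pos [DecidableEq V] (c : V → V → ℝ) (hnonneg : ∀ v w, 0 ≤ c v w)
    (hconn : ∀ v w : V, ∃ (n : ℕ) (p : ℕ → V), p 0 = v ∧ p n = w ∧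
      ∀ k < n, 0 < c (p k) (p (k + 1)))
    {x y : V} (hxy : x ≠ y) : 0 < sInf (potSet c x y) := by
  obtain ⟨n, p, hp0, hpn, hppos⟩ := hconn x y
  obtain ⟨δ, hδpos, hδ⟩ := energy_lower_bound c hnonneg hxy n p hp0 hpn hppos
  have hle : δ ≤ sInf (potSet c x y) := by
    apply le_csInf (potSet_nonempty c hxy)
    rintro t ⟨g, hgx, hgy, rfl⟩
    exact hδ g hgx hgy
  linarith

lemma graphEnergy_continuous (c : V → V → ℝ) : Continuous (graphEnergy (V := V) c) := by
  unfold graphEnergy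
  fun_prop

/-- Existence of a minimizer with values in `[0,1]`, harmonic off `{x,y}`. -/
lemma exists_minimizer [DecidableEq V] (c : V → V → ℝ)
    (hsymm : ∀ v w, c v w = c w v) (hnonneg : ∀ v w, 0 ≤ c v w)
    (hconn : ∀ v w : V, ∃ (n : ℕ) (p : ℕ → V), p 0 = v ∧ p n = w ∧
      ∀ k < n, 0 < c (p k) (p (k + 1)))
    {x y : V} (hxy : x ≠ y) :
    ∃ u : V → ℝ, u x = 1 ∧ u y = 0 ∧ (∀ v, 0 ≤ u v) ∧ (∀ v, u v ≤ 1) ∧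
      graphEnergy c u = sInf (potSet c x y) ∧
      ∀ v, v ≠ x → v ≠ y → gL c u v = 0 := by
  classical
  set f₀ : V → ℝ := fun v => if v = x then 1 else 0 with hf₀
  have hf₀x : f₀ x = 1 := by simp [hf₀]
  have hf₀y : f₀ y = 0 := by simp [hf₀, Ne.symm hxy]
  set M : ℝ := graphEnergy c f₀ with hM
  have hM0 : 0 ≤ M := graphEnergy_nonneg c hnonneg f₀
  choose n p hp0 hpn hppos using hconn x
  set C : V → ℝ := fun v =>
    1 + ∑ k ∈ Finset.range (n v), Real.sqrt (2 * M / c (p v k) (p v (k + 1))) with hC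
  have hbound : ∀ f : V → ℝ, f x = 1 → graphEnergy c f ≤ M → ∀ v, |f v| ≤ C v := by
    intro f hfx hfM v
    have htel : f x - f v = ∑ k ∈ Finset.range (n v), (f (p v k) - f (p v (k + 1))) := by
      rw [Finset.sum_range_sub' (fun k => f (p v k)) (n v), hp0, hpn]
    have hstep : ∀ k ∈ Finset.range (n v),
        |f (p v k) - f (p v (k + 1))| ≤ Real.sqrt (2 * M / c (p v k) (p v (k + 1))) := by
      intro k hk
      have hck : 0 < c (p v k) (p v (k + 1)) := hppos v k (Finset.mem_range.mp hk)
      have hterm := graphEnergy_ge_term c hnonneg f (p v k) (p v (k + 1))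
      have hsq : (f (p v k) - f (p v (k + 1))) ^ 2 ≤ 2 * M / c (p v k) (p v (k + 1)) := by
        rw [le_div_iff₀ hck]
        nlinarith [hterm]
      calc |f (p v k) - f (p v (k + 1))|
          = Real.sqrt ((f (p v k) - f (p v (k + 1))) ^ 2) := (Real.sqrt_sq_eq_abs _).symm
        _ ≤ _ := Real.sqrt_le_sqrt hsq
    have h1 : |f x - f v| ≤ ∑ k ∈ Finset.range (n v),
        Real.sqrt (2 * M / c (p v k) (p v (k + 1))) := by
      rw [htel]
      exact (Finset.abs_sum_le_sum_abs _ _).trans (Finset.sum_le_sum hstep)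
    have habs : |f v| ≤ |f x| + |f x - f v| := by
      have h := abs_sub (f x) (f x - f v)
      simpa using h
    rw [hfx] at habs h1
    simp only [abs_one] at habs
    simp only [hC]
    linarith
  set K : Set (V → ℝ) := {f | f x = 1 ∧ f y = 0 ∧ graphEnergy c f ≤ M} with hK
  have hKsub : K ⊆ Set.univ.pi fun v => Set.Icc (-(C v)) (C v) := by
    rintro f ⟨hfx, _, hfM⟩ v _
    exact abs_le.mp (hbound f hfx hfM v)
  have hKclosed : IsClosed K := by
    have h1 : IsClosed {f : V → ℝ | f x = 1} :=
      isClosed_eq (continuous_apply x) continuous_const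
    have h2 : IsClosed {f : V → ℝ | f y = 0} :=
      isClosed_eq (continuous_apply y) continuous_const
    have h3 : IsClosed {f : V → ℝ | graphEnergy c f ≤ M} :=
      isClosed_le (graphEnergy_continuous c) continuous_const
    have hKeq : K = {f : V → ℝ | f x = 1} ∩ ({f | f y = 0} ∩ {f | graphEnergy c f ≤ M}) := by
      ext f; simp [hK, Set.mem_inter_iff, and_assoc]
    rw [hKeq]
    exact h1.inter (h2.inter h3)
  have hKcompact : IsCompact K :=
    IsCompact.of_isClosed_subset (isCompact_univ_pi fun v => isCompact_Icc) hKclosed hKsub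
  have hKne : K.Nonempty := ⟨f₀, hf₀x, hf₀y, le_refl M⟩
  obtain ⟨u₀, hu₀K, hu₀min⟩ :=
    hKcompact.exists_isMinOn hKne (graphEnergy_continuous c).continuousOn
  obtain ⟨hu₀x, hu₀y, hu₀M⟩ := hu₀K
  have hmin : ∀ f : V → ℝ, f x = 1 → f y = 0 → graphEnergy c u₀ ≤ graphEnergy c f := by
    intro f hfx hfy
    by_cases hf : graphEnergy c f ≤ M
    · exact hu₀min ⟨hfx, hfy, hf⟩
    · exact le_trans hu₀M (le_of_not_ge hf)
  set u : V → ℝ := fun v => max 0 (min 1 (u₀ v)) with hu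
  have hux : u x = 1 := by simp [hu, hu₀x]
  have huy : u y = 0 := by simp [hu, hu₀y]
  have hu0 : ∀ v, 0 ≤ u v := fun v => le_max_left _ _
  have hu1 : ∀ v, u v ≤ 1 := fun v => max_le zero_le_one (min_le_left _ _)
  have hlip : ∀ v w : V, |u v - u w| ≤ |u₀ v - u₀ w| := by
    intro v w
    calc |u v - u w|
        ≤ max |(0:ℝ) - 0| |min 1 (u₀ v) - min 1 (u₀ w)| := abs_max_sub_max_le_max _ _ _ _
      _ = |min 1 (u₀ v) - min 1 (u₀ w)| := by simp
      _ ≤ max |(1:ℝ) - 1| |u₀ v - u₀ w| := abs_min_sub_min_le_max _ _ _ _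
      _ = |u₀ v - u₀ w| := by simp
  have hEu : graphEnergy c u ≤ graphEnergy c u₀ := by
    unfold graphEnergy
    apply mul_le_mul_of_nonneg_left _ (by norm_num)
    refine Finset.sum_le_sum fun v _ => Finset.sum_le_sum fun w _ => ?_
    apply mul_le_mul_of_nonneg_left _ (hnonneg v w)
    calc (u v - u w) ^ 2 = |u v - u w| ^ 2 := (sq_abs _).symm
      _ ≤ |u₀ v - u₀ w| ^ 2 := pow_le_pow_left₀ (abs_nonneg _) (hlip v w) 2
      _ = (u₀ v - u₀ w) ^ 2 := sq_abs _
  have huminAll : ∀ f : V → ℝ, f x = 1 → f y = 0 → graphEnergy c u ≤ graphEnergy c f :=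
    fun f hfx hfy => hEu.trans (hmin f hfx hfy)
  have hEeq : graphEnergy c u = sInf (potSet c x y) := by
    apply le_antisymm
    · apply le_csInf (potSet_nonempty c hxy)
      rintro t ⟨g, hgx, hgy, rfl⟩
      exact huminAll g hgx hgy
    · exact csInf_le (potSet_bddBelow c hnonneg x y) ⟨u, hux, huy, rfl⟩
  refine ⟨u, hux, huy, hu0, hu1, hEeq, ?_⟩
  intro v hvx hvy
  set e : V → ℝ := fun w => if w = v then 1 else 0 with he
  have hgrow : ∀ t : ℝ, 0 ≤ gB c e e * (t * t) + (2 * gB c u e) * t + 0 := by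
    intro t
    have hfx : (fun w => u w + t * e w) x = 1 := by
      simp only [he]
      rw [if_neg (Ne.symm hvx), hux]; ring
    have hfy : (fun w => u w + t * e w) y = 0 := by
      simp only [he]
      rw [if_neg (Ne.symm hvy), huy]; ring
    have h1 := huminAll (fun w => u w + t * e w) hfx hfy
    have h2 : graphEnergy c (fun w => u w + t * e w)
        = graphEnergy c u + 2 * t * gB c u e + t ^ 2 * gB c e e := by
      rw [← gB_self, gB_expand, gB_self]
    rw [h2] at h1
    nlinarith [h1]
  have hd := discrim_le_zero hgrow
  rw [discrim] at hd
  have hb2 : (2 * gB c u e) ^ 2 ≤ 0 := by nlinarith [hd]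
  have hb : gB c u e = 0 := by nlinarith [sq_nonneg (gB c u e), hb2, sq_abs (gB c u e)]
  have hBL : gB c u e = gL c u v := by
    rw [gB_eq_sum c hsymm]
    simp [he, ite_mul]
  rw [← hBL]
  exact hb

lemma gL_at_endpoints [DecidableEq V] (c : V → V → ℝ) (hsymm : ∀ v w, c v w = c w v)
    {x y : V} (hxy : x ≠ y) (u : V → ℝ) (hux : u x = 1) (huy : u y = 0)
    (hharm : ∀ v, v ≠ x → v ≠ y → gL c u v = 0) :
    gL c u x = graphEnergy c u ∧ gL c u y = -graphEnergy c u := by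
  have hE : graphEnergy c u = ∑ v : V, u v * gL c u v := by
    rw [← gB_self, gB_eq_sum c hsymm]
  have h1 : ∑ v : V, u v * gL c u v = gL c u x := by
    rw [Finset.sum_eq_single x]
    · rw [hux, one_mul]
    · intro v _ hv
      by_cases hvy : v = y
      · subst hvy; rw [huy, zero_mul]
      · rw [hharm v hv hvy, mul_zero]
    · intro h; exact absurd (mem_univ x) h
  have hsum := gL_sum c hsymm u
  have h2 : ∑ v : V, gL c u v = gL c u x + gL c u y := by
    rw [← Finset.sum_pair hxy]
    symm
    apply Finset.sum_subset (Finset.subset_univ _)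
    intro v _ hv
    simp only [Finset.mem_insert, Finset.mem_singleton] at hv
    push_neg at hv
    exact hharm v hv.1 hv.2
  constructor
  · rw [hE, h1]
  · have h3 : gL c u x + gL c u y = 0 := by rw [← h2, hsum]
    rw [hE, h1]; linarith

lemma effRes_triangle [DecidableEq V] (c : V → V → ℝ)
    (hsymm : ∀ v w, c v w = c w v) (hnonneg : ∀ v w, 0 ≤ c v w)
    (hconn : ∀ v w : V, ∃ (n : ℕ) (p : ℕ → V), p 0 = v ∧ p n = w ∧
      ∀ k < n, 0 < c (p k) (p (k + 1)))
    {x y z : V} (hxy : x ≠ y) (hyz : y ≠ z) (hxz : x ≠ z) :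
    effRes c x z ≤ effRes c x y + effRes c y z := by
  obtain ⟨u, hux, huy, hu0, hu1, hEu, hharmu⟩ := exists_minimizer c hsymm hnonneg hconn hxy
  obtain ⟨w, hwy, hwz, hw0, hw1, hEw, hharmw⟩ := exists_minimizer c hsymm hnonneg hconn hyz
  obtain ⟨hLux, hLuy⟩ := gL_at_endpoints c hsymm hxy u hux huy hharmu
  obtain ⟨hLwy, hLwz⟩ := gL_at_endpoints c hsymm hyz w hwy hwz hharmw
  set Eu := graphEnergy c u with hEudef
  set Ew := graphEnergy c w with hEwdef
  have hEupos : 0 < Eu := hEu ▸ sInf_potSet_pos c hnonneg hconn hxy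
  have hEwpos : 0 < Ew := hEw ▸ sInf_potSet_pos c hnonneg hconn hyz
  set φ : V → ℝ := fun s => Eu⁻¹ * u s + Ew⁻¹ * w s with hφ
  have hLφ : ∀ s, gL c φ s = Eu⁻¹ * gL c u s + Ew⁻¹ * gL c w s := fun s =>
    gL_comb c Eu⁻¹ Ew⁻¹ u w s
  have hLφx : gL c φ x = 1 := by
    rw [hLφ, hLux, hharmw x hxy hxz]
    rw [inv_mul_cancel₀ (ne_of_gt hEupos)]; ring
  have hLφz : gL c φ z = -1 := by
    rw [hLφ, hLwz, hharmu z (Ne.symm hxz) (Ne.symm hyz)]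
    rw [mul_neg, inv_mul_cancel₀ (ne_of_gt hEwpos)]; ring
  have hLφy : gL c φ y = 0 := by
    rw [hLφ, hLuy, hLwy, mul_neg, inv_mul_cancel₀ (ne_of_gt hEupos),
      inv_mul_cancel₀ (ne_of_gt hEwpos)]
    ring
  have hLφ0 : ∀ s, s ≠ x → s ≠ z → gL c φ s = 0 := by
    intro s hsx hsz
    by_cases hsy : s = y
    · subst hsy; exact hLφy
    · rw [hLφ, hharmu s hsx hsy, hharmw s hsy hsz]; ring
  have hsum_xz : ∀ F : V → ℝ, ∑ s : V, F s * gL c φ s = F x - F z := by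
    intro F
    have h2 : ∑ s : V, F s * gL c φ s = ∑ s ∈ ({x, z} : Finset V), F s * gL c φ s := by
      symm
      apply Finset.sum_subset (Finset.subset_univ _)
      intro s _ hs
      simp only [Finset.mem_insert, Finset.mem_singleton] at hs
      push_neg at hs
      rw [hLφ0 s hs.1 hs.2, mul_zero]
    rw [h2, Finset.sum_pair hxz, hLφx, hLφz]
    ring
  have hD : gB c φ φ = φ x - φ z := by
    rw [gB_eq_sum c hsymm, hsum_xz]
  have hpair : ∀ f : V → ℝ, f x = 1 → f z = 0 → gB c φ f = 1 := by
    intro f hfx hfz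
    rw [gB_eq_sum c hsymm, hsum_xz, hfx, hfz]
    ring
  have hDle : gB c φ φ ≤ Eu⁻¹ + Ew⁻¹ := by
    have hφx : φ x = Eu⁻¹ + Ew⁻¹ * w x := by simp only [hφ, hux, mul_one]
    have hφz : φ z = Eu⁻¹ * u z := by simp only [hφ, hwz, mul_zero, add_zero]
    rw [hD, hφx, hφz]
    have h1 : 0 ≤ Eu⁻¹ * u z := mul_nonneg (by positivity) (hu0 z)
    have h2 : Ew⁻¹ * w x ≤ Ew⁻¹ := by
      nlinarith [hw1 x, inv_pos.mpr hEwpos]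
    nlinarith [h1, h2]
  have hDpos : 0 < gB c φ φ := by
    set f₁ : V → ℝ := fun v => if v = x then 1 else 0 with hf₁
    have hf1x : f₁ x = 1 := by simp [hf₁]
    have hf1z : f₁ z = 0 := by simp [hf₁, Ne.symm hxz]
    have h1 := hpair f₁ hf1x hf1z
    have hcs := gB_sq_le c hnonneg φ f₁
    rw [h1, gB_self c f₁] at hcs
    have hEf := graphEnergy_nonneg c hnonneg f₁
    by_contra hD'
    push_neg at hD'
    nlinarith [hcs, hEf, hD']
  have hlow : ∀ t ∈ potSet c x z, (gB c φ φ)⁻¹ ≤ t := by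
    rintro t ⟨g, hgx, hgz, rfl⟩
    have h1 := hpair g hgx hgz
    have hcs := gB_sq_le c hnonneg φ g
    rw [h1, gB_self c g] at hcs
    rw [inv_eq_one_div, div_le_iff₀ hDpos]
    nlinarith [hcs]
  have hsInf : (gB c φ φ)⁻¹ ≤ sInf (potSet c x z) := le_csInf (potSet_nonempty c hxz) hlow
  have hfinal : effRes c x z ≤ gB c φ φ := by
    rw [effRes_of_ne c hxz]
    calc (sInf (potSet c x z))⁻¹ ≤ ((gB c φ φ)⁻¹)⁻¹ := inv_anti₀ (by positivity) hsInf
      _ = gB c φ φ := inv_inv _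
  have hxyR : effRes c x y = Eu⁻¹ := by rw [effRes_of_ne c hxy, ← hEu]
  have hyzR : effRes c y z = Ew⁻¹ := by rw [effRes_of_ne c hyz, ← hEw]
  rw [hxyR, hyzR]
  exact hfinal.trans hDle

lemma potSet_symm (c : V → V → ℝ) (x y : V) : potSet c x y = potSet c y x := by
  have key : ∀ a b : V, potSet c a b ⊆ potSet c b a := by
    rintro a b t ⟨g, hga, hgb, rfl⟩
    refine ⟨fun v => 1 - g v, by simp only []; rw [hgb]; ring, by simp only []; rw [hga]; ring, ?_⟩
    unfold graphEnergy
    congr 1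
    exact Finset.sum_congr rfl fun v _ => Finset.sum_congr rfl fun w _ => by ring
  exact le_antisymm (key x y) (key y x)

end Aux

/-- On any finite connected weighted graph, the effective resistance `R` is a metric
on `V`: `R(x,y) = 0` iff `x = y`, `R(x,y) = R(y,x)`, and `R(x,z) ≤ R(x,y) + R(y,z)`. -/
theorem effective_resistance_is_metric
    {V : Type*} [Fintype V] [DecidableEq V] (hV : 2 ≤ Fintype.card V)
    (c : V → V → ℝ) (hsymm : ∀ v w, c v w = c w v) (hnonneg : ∀ v w, 0 ≤ c v w)
    (hdiag : ∀ v, c v v = 0)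
    (hconn : ∀ v w : V, ∃ (n : ℕ) (p : ℕ → V), p 0 = v ∧ p n = w ∧
      ∀ k < n, 0 < c (p k) (p (k + 1))) :
    ∀ x y z : V,
      (effRes c x y = 0 ↔ x = y) ∧
      effRes c x y = effRes c y x ∧
      effRes c x z ≤ effRes c x y + effRes c y z := by
  intro x y z
  have hdiagR : ∀ a : V, effRes c a a = 0 := fun a => by rw [effRes, if_pos rfl]
  have hnonnegR : ∀ a b : V, 0 ≤ effRes c a b := by
    intro a b
    rw [effRes]
    split
    · exact le_refl 0
    · refine inv_nonneg.mpr (Real.sInf_nonneg ?_)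
      rintro t ⟨g, _, _, rfl⟩
      exact graphEnergy_nonneg c hnonneg g
  refine ⟨⟨?_, ?_⟩, ?_, ?_⟩
  · intro h
    by_contra hxy
    have hpos := sInf_potSet_pos c hnonneg hconn hxy
    rw [effRes_of_ne c hxy, inv_eq_zero] at h
    linarith [hpos, h.le]
  · rintro rfl; exact hdiagR x
  · by_cases hxy : x = y
    · subst hxy; rfl
    · rw [effRes_of_ne c hxy, effRes_of_ne c (Ne.symm hxy), potSet_symm]
  · by_cases hxy : x = y
    · subst hxy
      rw [hdiagR x]
      linarith [le_refl (effRes c x z)]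
    · by_cases hyz : y = z
      · subst hyz
        rw [hdiagR y]
        linarith [le_refl (effRes c x y)]
      · by_cases hxz : x = z
        · subst hxz
          rw [hdiagR x]
          linarith [hnonnegR x y, hnonnegR y x]
        · exact effRes_triangle c hsymm hnonneg hconn hxy hyz hxz
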